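/- arXiv:1106.2987 — 3 statements merged into one kernel-verified Lean document; each statement's English description precedes it below -/
import Mathlib

section
/- For integers n and Δ with 3 ≤ Δ ≤ n−1, we have ecc(B(n,Δ)) < ecc(B(n,Δ−1)). Consequently the chain of strict inequalities ecc(S_n) = ecc(B(n,n−1)) < ecc(B(n,n−2)) < ⋯ < ecc(B(n,3)) < ecc(B(n,2)) = ecc(P_n) holds. -/
open SimpleGraph

/-- The eccentricity of a vertex: the maximum distance from it to any other vertex. -/
noncomputable def eccentricity {V : Type*} [Fintype V] (G : SimpleGraph V) (v : V) : ℕ :=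
  Finset.univ.sup fun u => G.dist v u

/-- The average eccentricity of a graph. -/
noncomputable def avgEcc {V : Type*} [Fintype V] (G : SimpleGraph V) : ℝ :=
  (∑ v : V, (eccentricity G v : ℝ)) / (Fintype.card V : ℝ)

/-- The broom `B(n, Δ)`: a path `0 — 1 — ⋯ — (n-Δ)` together with `Δ-1` pendant
vertices `n-Δ+1, …, n-1` attached to the vertex `n-Δ`. -/
def broom (n Δ : ℕ) : SimpleGraph (Fin n) :=
  SimpleGraph.fromRel (fun i j =>
    ((i : ℕ) + 1 = (j : ℕ) ∧ (j : ℕ) ≤ n - Δ) ∨ ((i : ℕ) = n - Δ ∧ n - Δ < (j : ℕ)))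

/-- The star `S n` on `n` vertices with center `0`. -/
def starGraph (n : ℕ) : SimpleGraph (Fin n) :=
  SimpleGraph.fromRel (fun i _ => (i : ℕ) = 0)

/-!
In `B(n, Δ)` put `c = n - Δ` (the vertex carrying the pendants) and give each vertex `v` the
depth `d v = min v (c + 1)`. Since `d` changes by at most one along an edge, the end `0` of the
handle and any pendant vertex lie at distance at least `d v` and `c + 1 - d v` from `v`, and
walks through the handle show that `ecc v = max (d v) (c + 1 - d v)`. Passing from `Δ` to
`Δ - 1` replaces `c` by `c + 1`, which does not decrease any eccentricity and raises that of
a pendant vertex. The star is `B(n, n - 1)` after swapping its centre with a leaf, and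
`B(n, 2)` is the path itself.
-/

namespace SimpleGraph

variable {V W : Type*} {G : SimpleGraph V} {H : SimpleGraph W}

lemma Hom.edist_map_le (f : G →g H) (u v : V) : H.edist (f u) (f v) ≤ G.edist u v := by
  rw [edist_eq_sInf (G := G)]
  refine le_sInf ?_
  rintro _ ⟨p, rfl⟩
  simpa using H.edist_le (p.map f)

lemma Iso.dist_map (e : G ≃g H) (u v : V) : H.dist (e u) (e v) = G.dist u v := by
  refine congrArg ENat.toNat (le_antisymm (e.toHom.edist_map_le u v) ?_)
  simpa using e.symm.toHom.edist_map_le (e u) (e v)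

lemma Walk.le_add_length_of_adj {f : V → ℕ} (hf : ∀ a b, G.Adj a b → f b ≤ f a + 1) :
    ∀ {u v : V} (p : G.Walk u v), f v ≤ f u + p.length
  | _, _, .nil => by simp
  | _, _, .cons h p => by
    have := hf _ _ h
    have := le_add_length_of_adj hf p
    simp only [length_cons]
    omega

lemma Reachable.le_add_dist_of_adj {f : V → ℕ} (hf : ∀ a b, G.Adj a b → f b ≤ f a + 1)
    {u v : V} (h : G.Reachable u v) : f v ≤ f u + G.dist u v := by
  obtain ⟨p, hp⟩ := h.exists_walk_length_eq_dist
  exact hp ▸ p.le_add_length_of_adj hf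

end SimpleGraph

section AverageEccentricity

variable {V W : Type*} [Fintype V] [Fintype W] {G : SimpleGraph V} {H : SimpleGraph W}

lemma SimpleGraph.Iso.eccentricity_map (e : G ≃g H) (v : V) :
    eccentricity H (e v) = eccentricity G v := by
  rw [eccentricity, ← Finset.map_univ_equiv e.toEquiv, Finset.sup_map]
  simp [Function.comp_def, e.dist_map, eccentricity]

lemma SimpleGraph.Iso.avgEcc_eq (e : G ≃g H) : avgEcc G = avgEcc H := by
  simp only [avgEcc, Fintype.card_congr e.toEquiv]
  rw [← Equiv.sum_comp e.toEquiv]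
  simp [e.eccentricity_map]

lemma avgEcc_lt_avgEcc {G' : SimpleGraph V} (hle : ∀ v, eccentricity G v ≤ eccentricity G' v)
    (hlt : ∃ v, eccentricity G v < eccentricity G' v) : avgEcc G < avgEcc G' := by
  obtain ⟨w, hw⟩ := hlt
  have : Nonempty V := ⟨w⟩
  refine div_lt_div_of_pos_right ?_ (by positivity)
  exact_mod_cast Finset.sum_lt_sum (fun v _ => hle v) ⟨w, Finset.mem_univ w, hw⟩

end AverageEccentricity

section Broom

variable {n Δ : ℕ}

lemma broom_adj {i j : Fin n} :
    (broom n Δ).Adj i j ↔ (i : ℕ) ≠ j ∧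
      ((i + 1 = (j : ℕ) ∧ (j : ℕ) ≤ n - Δ) ∨ ((i : ℕ) = n - Δ ∧ n - Δ < j) ∨
       (j + 1 = (i : ℕ) ∧ (i : ℕ) ≤ n - Δ) ∨ ((j : ℕ) = n - Δ ∧ n - Δ < i)) := by
  simp only [broom, fromRel_adj, ne_eq, Fin.ext_iff]
  tauto

lemma broom_adj_center {v : Fin n} (hv : n - Δ < v) :
    (broom n Δ).Adj ⟨n - Δ, hv.trans v.isLt⟩ v := by
  rw [broom_adj]
  exact ⟨hv.ne, Or.inr (Or.inl ⟨rfl, hv⟩)⟩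

lemma broom_exists_walk_of_le {i j : Fin n} (hij : i ≤ j) (hj : (j : ℕ) ≤ n - Δ) :
    ∃ p : (broom n Δ).Walk i j, p.length = j - i := by
  obtain ⟨k, hk⟩ : ∃ k, (j : ℕ) = i + k := ⟨j - i, by omega⟩
  induction k generalizing j with
  | zero => exact ⟨Walk.nil.copy rfl (Fin.ext hk.symm), by simp only [Walk.length_copy, Walk.length_nil]; omega⟩
  | succ k ih =>
    obtain ⟨p, hp⟩ := ih (j := ⟨i + k, by omega⟩) (Fin.le_def.2 (by simp)) (by simp only; omega) rfl
    have hadj : (broom n Δ).Adj ⟨i + k, by omega⟩ j := by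
      rw [broom_adj]
      simp only
      omega
    exact ⟨p.concat hadj, by simp only [Walk.length_concat, hp]; omega⟩

lemma broom_dist_le_sub {i j : Fin n} (hij : i ≤ j) (hj : (j : ℕ) ≤ n - Δ) :
    (broom n Δ).dist i j ≤ j - i := by
  obtain ⟨p, hp⟩ := broom_exists_walk_of_le hij hj
  exact hp ▸ dist_le p

lemma broom_connected (hn : 0 < n) : (broom n Δ).Connected := by
  have : Nonempty (Fin n) := ⟨⟨0, hn⟩⟩
  suffices h : ∀ v, (broom n Δ).Reachable ⟨0, hn⟩ v from
    ⟨fun u v => (h u).symm.trans (h v)⟩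
  intro v
  by_cases hv : (v : ℕ) ≤ n - Δ
  · obtain ⟨p, -⟩ := broom_exists_walk_of_le (i := ⟨0, hn⟩) (Fin.le_def.2 (Nat.zero_le _)) hv
    exact ⟨p⟩
  · obtain ⟨p, -⟩ := broom_exists_walk_of_le (i := ⟨0, hn⟩) (j := ⟨n - Δ, by omega⟩)
      (Fin.le_def.2 (Nat.zero_le _)) le_rfl
    exact ⟨p.concat (broom_adj_center (by omega))⟩

lemma broom_dist_center_le (v : Fin n) (hc : n - Δ < n) :
    (broom n Δ).dist v ⟨n - Δ, hc⟩ ≤ if (v : ℕ) ≤ n - Δ then n - Δ - v else 1 := by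
  split_ifs with hv
  · exact broom_dist_le_sub (Fin.le_def.2 hv) le_rfl
  · rw [dist_comm, dist_eq_one_iff_adj.2 (broom_adj_center (by omega))]

lemma broom_dist_le (hΔn : Δ < n) (v u : Fin n) :
    (broom n Δ).dist v u ≤
      max (min (v : ℕ) (n - Δ + 1)) (n - Δ + 1 - min (v : ℕ) (n - Δ + 1)) := by
  by_cases h : (u : ℕ) ≤ n - Δ ∧ (v : ℕ) ≤ n - Δ
  · rcases le_total v u with hvu | huv
    · have := broom_dist_le_sub hvu h.1
      omega
    · have := broom_dist_le_sub huv h.2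
      rw [dist_comm] at this
      omega
  · have hc : n - Δ < n := by omega
    have hv := broom_dist_center_le v hc
    have hu := broom_dist_center_le u hc
    rw [dist_comm] at hu
    have := (broom_connected (Δ := Δ) (by omega)).dist_triangle
      (u := v) (v := ⟨n - Δ, hc⟩) (w := u)
    split_ifs at hv hu <;> omega

theorem broom_eccentricity (hΔ : 2 ≤ Δ) (hΔn : Δ < n) (v : Fin n) :
    eccentricity (broom n Δ) v =
      max (min (v : ℕ) (n - Δ + 1)) (n - Δ + 1 - min (v : ℕ) (n - Δ + 1)) := by
  refine le_antisymm (Finset.sup_le fun u _ => broom_dist_le hΔn v u) ?_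
  have hdepth : ∀ a b : Fin n, (broom n Δ).Adj a b →
      min (b : ℕ) (n - Δ + 1) ≤ min (a : ℕ) (n - Δ + 1) + 1 := by
    intro a b h
    rw [broom_adj] at h
    omega
  have hconn := broom_connected (Δ := Δ) (by omega : 0 < n)
  have hfirst := (hconn ⟨0, by omega⟩ v).le_add_dist_of_adj hdepth
  have hlast := (hconn v ⟨n - 1, by omega⟩).le_add_dist_of_adj hdepth
  have hfirst_le : (broom n Δ).dist v ⟨0, by omega⟩ ≤ eccentricity (broom n Δ) v :=
    Finset.le_sup (Finset.mem_univ _)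
  have hlast_le : (broom n Δ).dist v ⟨n - 1, by omega⟩ ≤ eccentricity (broom n Δ) v :=
    Finset.le_sup (Finset.mem_univ _)
  rw [dist_comm] at hfirst
  simp only at hfirst hlast
  omega

lemma broom_two_eq_pathGraph : broom n 2 = pathGraph n := by
  ext i j
  rw [broom_adj, pathGraph_adj]
  omega

end Broom

def starGraphIsoBroom {n : ℕ} (hn : 2 ≤ n) : _root_.starGraph n ≃g broom n (n - 1) where
  toEquiv := Equiv.swap ⟨0, by omega⟩ ⟨1, by omega⟩
  map_rel_iff' {i j} := by
    simp only [broom_adj, _root_.starGraph, fromRel_adj, Equiv.swap_apply_def, ne_eq, Fin.ext_iff]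
    split_ifs <;> simp_all <;> omega

/-- For `3 ≤ Δ ≤ n-1` one has `ecc (B(n,Δ)) < ecc (B(n,Δ-1))`; consequently the chain
`ecc (Sₙ) = ecc (B(n,n-1)) < ⋯ < ecc (B(n,2)) = ecc (Pₙ)` holds. -/
theorem avgEcc_broom_strict_chain {n Δ : ℕ} (hΔ : 3 ≤ Δ) (hΔn : Δ ≤ n - 1) :
    avgEcc (broom n Δ) < avgEcc (broom n (Δ - 1)) ∧
    avgEcc (_root_.starGraph n) = avgEcc (broom n (n - 1)) ∧
    avgEcc (broom n 2) = avgEcc (SimpleGraph.pathGraph n) := by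
  have hecc := broom_eccentricity (n := n) (Δ := Δ) (by omega) (by omega)
  have hecc' := broom_eccentricity (n := n) (Δ := Δ - 1) (by omega) (by omega)
  refine ⟨avgEcc_lt_avgEcc (fun v => ?_) ⟨⟨n - 1, by omega⟩, ?_⟩,
    (starGraphIsoBroom (by omega)).avgEcc_eq, by rw [broom_two_eq_pathGraph]⟩
  · rw [hecc, hecc']
    omega
  · rw [hecc, hecc']
    simp only
    omega
end

section
/- Let p = (p₁, p₂, …, p_k) and q = (q₁, q₂, …, q_k) be two integer arrays of length k ≥ 2 of positive integers such that p majorizes q and n − 1 = p₁ + p₂ + ⋯ + p_k = q₁ + q₂ + ⋯ + q_k. Then ecc(S(p₁, p₂, …, p_k)) ≥ ecc(S(q₁, q₂, …, q_k)). -/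
open SimpleGraph

/-- The starlike tree `S(a 0, a 1, …, a (k-1))`: a central vertex (`none`) with `k`
pendant paths attached, the `i`-th of length `a i`. -/
def starlike {k : ℕ} (a : Fin k → ℕ) : SimpleGraph (Option (Σ i : Fin k, Fin (a i))) :=
  SimpleGraph.fromRel (fun x y =>
    (∃ (i : Fin k) (j : Fin (a i)), (j : ℕ) = 0 ∧ x = none ∧ y = some ⟨i, j⟩) ∨
    (∃ (i : Fin k) (j j' : Fin (a i)), (j : ℕ) + 1 = (j' : ℕ) ∧
      x = some ⟨i, j⟩ ∧ y = some ⟨i, j'⟩))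

/-!
For nonincreasing `a`, the centre of `S(a)` has eccentricity `a₀`, the vertex at depth `d` on an
arm `i ≠ 0` has eccentricity `d + a₀`, and the one at depth `d` on arm `0` has
`max (a₀ - d) (d + a₁)`. Summing, four times the total eccentricity of `S(a)` equals
`E(a) = 4 a₀ N + 2 a₀ + 2 a₁ + (a₀ + a₁)² + 2 ∑ aᵢ² - 4 a₀² + 2 N + 1`, where `N = ∑ aᵢ`, up to an
error in `{0, 1}` coming from the parity of `a₀ - a₁`.

If `p` majorizes `q`, summation by parts against the nonincreasing weights `pᵢ + qᵢ` gives
`∑ pᵢ² - ∑ qᵢ² ≥ (p₀ - q₀)(p₀ + q₀ - p₁ - q₁)`. Together with `p₀ ≥ q₀`, `p₀ + p₁ ≥ q₀ + q₁` and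
`p₀ + p₁, q₀ + q₁ ≤ N` this yields `E(q) ≤ E(p)`, so the total eccentricities satisfy
`4 (S(q) - S(p)) ≤ 1`, whence `S(q) ≤ S(p)`; both trees have `N + 1` vertices.
-/

open Finset

theorem sum_mul_nonneg_of_sum_Iic_nonneg {ι : Type*} [Fintype ι] [LinearOrder ι]
    [LocallyFiniteOrderBot ι] {u : ι → ℤ} {c : ι → ℕ} (hc : Antitone c)
    (hu : ∀ m, 0 ≤ ∑ i ∈ Iic m, u i) : 0 ≤ ∑ i, u i * c i := by
  classical
  -- Layer cake: `c i` counts the thresholds `t < c i`, and for each `t` the set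
  -- `{i | t < c i}` is empty or an initial segment `Iic m`.
  set C := univ.sup c
  have layer : ∀ i, u i * c i = ∑ t ∈ range C, if t < c i then u i else 0 := by
    intro i
    have : (range C).filter (· < c i) = range (c i) := by
      ext t
      have := le_sup (f := c) (mem_univ i)
      simp only [mem_filter, mem_range]
      omega
    rw [← sum_filter, this, sum_const, card_range, nsmul_eq_mul, mul_comm]
  have lower : ∀ t, 0 ≤ ∑ i with t < c i, u i := by
    intro t
    rcases (univ.filter (t < c ·)).eq_empty_or_nonempty with hs | hs
    · simp [hs]
    · convert hu (max' _ hs) using 2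
      ext i
      simp only [mem_filter, mem_univ, true_and, mem_Iic]
      exact ⟨fun h => le_max' _ _ (by simpa using h),
        fun h => (mem_filter.1 (max'_mem _ hs)).2.trans_le (hc h)⟩
  calc 0 ≤ ∑ t ∈ range C, ∑ i with t < c i, u i := sum_nonneg fun t _ => lower t
    _ = ∑ i, u i * c i := by simp only [sum_filter, layer]; exact sum_comm

theorem sub_mul_le_sum_sq_sub_sum_sq {k : ℕ} {p q : Fin (k + 2) → ℕ} (hp : Antitone p)
    (hq : Antitone q) (hmaj : ∀ m, ∑ i ∈ Iic m, q i ≤ ∑ i ∈ Iic m, p i) :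
    ((p 0 : ℤ) - q 0) * (p 0 + q 0 - p 1 - q 1) ≤ ∑ i, (p i : ℤ) ^ 2 - ∑ i, (q i : ℤ) ^ 2 := by
  -- Weights `p i + q i` with the first one lowered to `p 1 + q 1`: the lost term
  -- `(p 0 - q 0) * (p 0 + q 0 - p 1 - q 1)` is the left-hand side.
  have key := sum_mul_nonneg_of_sum_Iic_nonneg (u := fun i => (p i : ℤ) - q i)
    (c := fun i => p (i ⊔ 1) + q (i ⊔ 1))
    (fun i j h => add_le_add (hp (sup_le_sup_right h 1)) (hq (sup_le_sup_right h 1)))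
    (fun m => by rw [sum_sub_distrib, sub_nonneg]; exact_mod_cast hmaj m)
  have hsucc (i : Fin (k + 1)) : i.succ ⊔ 1 = i.succ :=
    sup_eq_left.2 (Fin.one_le_of_ne_zero (Fin.succ_ne_zero i))
  rw [Fin.sum_univ_succ] at key
  simp only [hsucc, sup_eq_right.2 (Fin.zero_le (1 : Fin (k + 2)))] at key
  rw [Fin.sum_univ_succ, Fin.sum_univ_succ (fun i => (q i : ℤ) ^ 2)]
  have : ∑ i : Fin (k + 1), ((p i.succ : ℤ) - q i.succ) * ↑(p i.succ + q i.succ) =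
      ∑ i : Fin (k + 1), (p i.succ : ℤ) ^ 2 - ∑ i : Fin (k + 1), (q i.succ : ℤ) ^ 2 := by
    rw [← sum_sub_distrib]
    exact sum_congr rfl fun i _ => by push_cast; ring
  push_cast at key this
  linarith

namespace SimpleGraph

variable {V : Type*} {G : SimpleGraph V}

theorem Walk.le_length_of_le_one_of_adj {D : V → V → ℕ} (hself : ∀ v, D v v = 0)
    (htri : ∀ u v w, D u w ≤ D u v + D v w) (hadj : ∀ u v, G.Adj u v → D u v ≤ 1) :
    ∀ {u v : V} (p : G.Walk u v), D u v ≤ p.length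
  | _, _, .nil => (hself _).le
  | u, w, .cons (v := v) h p => by
    have := htri u v w
    have := hadj u v h
    have := le_length_of_le_one_of_adj hself htri hadj p
    rw [Walk.length_cons]
    omega

theorem Reachable.le_dist_of_le_one_of_adj {D : V → V → ℕ} (hself : ∀ v, D v v = 0)
    (htri : ∀ u v w, D u w ≤ D u v + D v w) (hadj : ∀ u v, G.Adj u v → D u v ≤ 1)
    {u v : V} (hr : G.Reachable u v) : D u v ≤ G.dist u v := by
  obtain ⟨p, hp⟩ := hr.exists_walk_length_eq_dist
  exact hp ▸ p.le_length_of_le_one_of_adj hself htri hadj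

theorem exists_walk_length_eq_sub_of_adj_succ (f : ℕ → V) {m n : ℕ}
    (hf : ∀ i, m ≤ i → i < n → G.Adj (f i) (f (i + 1))) (hmn : m ≤ n) :
    ∃ p : G.Walk (f m) (f n), p.length = n - m := by
  induction n, hmn using Nat.le_induction with
  | base => exact ⟨.nil, by simp⟩
  | succ n hmn ih =>
    obtain ⟨p, hp⟩ := ih fun i hmi hin => hf i hmi (by omega)
    exact ⟨p.concat (hf n hmn (by omega)), by simp [hp]; omega⟩

end SimpleGraph

theorem dist_le_eccentricity {V : Type*} [Fintype V] (G : SimpleGraph V) (v u : V) :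
    G.dist v u ≤ eccentricity G v :=
  le_sup (f := fun u => G.dist v u) (mem_univ u)

theorem eccentricity_le_iff {V : Type*} [Fintype V] {G : SimpleGraph V} {v : V} {e : ℕ} :
    eccentricity G v ≤ e ↔ ∀ u, G.dist v u ≤ e := by
  simp [eccentricity]

namespace Starlike

section Distance

variable {k : ℕ} (a : Fin k → ℕ)

def depth : Option (Σ i : Fin k, Fin (a i)) → ℕ
  | none => 0
  | some ⟨_, j⟩ => j + 1

def starDist : Option (Σ i : Fin k, Fin (a i)) → Option (Σ i : Fin k, Fin (a i)) → ℕ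
  | some ⟨i, j⟩, some ⟨i', j'⟩ => if i = i' then (j - j' : ℕ) + (j' - j : ℕ) else j + j' + 2
  | x, y => depth a x + depth a y

variable {a}

theorem starDist_self (x) : starDist a x x = 0 := by
  rcases x with _ | ⟨i, j⟩ <;> simp [starDist, depth]

theorem starDist_triangle (x y z) : starDist a x z ≤ starDist a x y + starDist a y z := by
  rcases x with _ | ⟨i, j⟩ <;> rcases y with _ | ⟨i', j'⟩ <;> rcases z with _ | ⟨i'', j''⟩ <;>
    simp only [starDist, depth] <;> (try split_ifs) <;> omega

theorem starDist_le_one_of_adj {x y} (h : (starlike a).Adj x y) : starDist a x y ≤ 1 := by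
  rw [starlike, fromRel_adj] at h
  obtain ⟨-, h | h⟩ := h <;>
    rcases h with ⟨i, j, hj, rfl, rfl⟩ | ⟨i, j, j', hj, rfl, rfl⟩ <;>
      simp only [starDist, depth, if_true] <;> omega

variable (a)

def armVertex (i : Fin k) : ℕ → Option (Σ i : Fin k, Fin (a i))
  | 0 => none
  | m + 1 => if h : m < a i then some ⟨i, ⟨m, h⟩⟩ else none

variable {a}

theorem armVertex_succ (i : Fin k) (j : Fin (a i)) : armVertex a i (j + 1) = some ⟨i, j⟩ := by
  simp [armVertex]

theorem adj_armVertex_succ (i : Fin k) {m : ℕ} (hm : m < a i) :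
    (starlike a).Adj (armVertex a i m) (armVertex a i (m + 1)) := by
  rw [starlike, fromRel_adj]
  rcases m with _ | m
  · refine ⟨by simp [armVertex, hm], .inl <| .inl ⟨i, ⟨0, hm⟩, rfl, rfl, by simp [armVertex, hm]⟩⟩
  · refine ⟨by simp [armVertex, hm], .inl <| .inr ⟨i, ⟨m, by omega⟩, ⟨m + 1, hm⟩, rfl, ?_, ?_⟩⟩ <;>
      simp [armVertex, hm, show m < a i by omega]

theorem exists_walk_armVertex (i : Fin k) {m n : ℕ} (hmn : m ≤ n) (hn : n ≤ a i) :
    ∃ p : (starlike a).Walk (armVertex a i m) (armVertex a i n), p.length = n - m :=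
  exists_walk_length_eq_sub_of_adj_succ _ (fun _ _ h => adj_armVertex_succ i (by omega)) hmn

theorem dist_armVertex_le (i : Fin k) {m n : ℕ} (hmn : m ≤ n) (hn : n ≤ a i) :
    (starlike a).dist (armVertex a i m) (armVertex a i n) ≤ n - m :=
  (exists_walk_armVertex i hmn hn).elim fun p hp => hp ▸ dist_le p

theorem dist_none_some_le (i : Fin k) (j : Fin (a i)) :
    (starlike a).dist none (some ⟨i, j⟩) ≤ j + 1 := by
  have h := dist_armVertex_le i (Nat.zero_le _) j.isLt
  rwa [armVertex_succ] at h

theorem reachable_none (x) : (starlike a).Reachable none x := by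
  rcases x with _ | ⟨i, j⟩
  · rfl
  · obtain ⟨p, -⟩ := exists_walk_armVertex i (Nat.zero_le (j + 1)) j.isLt
    rw [armVertex_succ] at p
    exact ⟨p⟩

theorem dist_le_starDist (x y) : (starlike a).dist x y ≤ starDist a x y := by
  rcases x with _ | ⟨i, j⟩ <;> rcases y with _ | ⟨i', j'⟩
  · simp [starDist, depth]
  · simpa [starDist, depth] using dist_none_some_le i' j'
  · simpa [starDist, depth, SimpleGraph.dist_comm] using dist_none_some_le i j
  · simp only [starDist]
    split_ifs with h
    · subst h
      rcases le_total j j' with h | h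
      · have h' := dist_armVertex_le i (Nat.succ_le_succ h) j'.isLt
        rw [armVertex_succ, armVertex_succ] at h'
        omega
      · have h' := dist_armVertex_le i (Nat.succ_le_succ h) j.isLt
        rw [armVertex_succ, armVertex_succ, SimpleGraph.dist_comm] at h'
        omega
    · calc (starlike a).dist (some ⟨i, j⟩) (some ⟨i', j'⟩)
          ≤ (starlike a).dist none (some ⟨i, j⟩) + (starlike a).dist none (some ⟨i', j'⟩) := by
            rw [SimpleGraph.dist_comm (u := none)]; exact (reachable_none _).dist_triangle_right _
        _ ≤ j + j' + 2 := by
            have := dist_none_some_le i j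
            have := dist_none_some_le i' j'
            omega

theorem dist_starlike (x y) : (starlike a).dist x y = starDist a x y :=
  (dist_le_starDist x y).antisymm <| ((reachable_none x).symm.trans (reachable_none y))
    |>.le_dist_of_le_one_of_adj starDist_self starDist_triangle fun _ _ => starDist_le_one_of_adj

theorem starDist_none_armVertex {i : Fin k} {m : ℕ} (hm : m ≤ a i) :
    starDist a none (armVertex a i m) = m := by
  rcases m with _ | m
  · rfl
  · simp [armVertex, starDist, depth, show m < a i by omega]

theorem starDist_some_armVertex (i : Fin k) (j : Fin (a i)) {i' : Fin k} {m : ℕ}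
    (hm : m ≤ a i') :
    starDist a (some ⟨i, j⟩) (armVertex a i' m) =
      if i = i' then (j + 1 - m) + (m - (j + 1)) else j + 1 + m := by
  rcases m with _ | m
  · simp [armVertex, starDist, depth]
  · simp only [armVertex, show m < a i' by omega, dite_true, starDist]
    split_ifs <;> omega

end Distance

def armEccSum (x y : ℕ) : ℕ := ∑ j ∈ range x, max (x - 1 - j) (j + 1 + y)

theorem armEccSum_succ (x y : ℕ) : armEccSum (x + 1) y = armEccSum x (y + 1) + max x (y + 1) := by
  rw [armEccSum, armEccSum, sum_range_succ']
  congr 1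
  · refine sum_congr rfl fun j _ => ?_
    congr 1 <;> omega
  · congr 1; omega

theorem two_mul_sum_range_add (m y : ℕ) :
    2 * ∑ j ∈ range m, (j + 1 + y) = m ^ 2 + m + 2 * m * y := by
  induction m with
  | zero => simp
  | succ m ih => rw [sum_range_succ, mul_add, ih]; ring

theorem two_mul_armEccSum_of_le {x y : ℕ} (h : x ≤ y + 2) :
    2 * armEccSum x y = x ^ 2 + x + 2 * x * y := by
  rw [armEccSum, sum_congr rfl fun j _ => max_eq_right (by omega), two_mul_sum_range_add]

theorem sub_four_mul_armEccSum_mem_Icc {x y : ℕ} (hyx : y ≤ x) :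
    (2 * x ^ 2 + 2 * x + 4 * x * y + (x - y - 1) ^ 2 : ℤ) - 4 * armEccSum x y ∈ Set.Icc 0 1 := by
  induction x generalizing y with
  | zero =>
    obtain rfl : y = 0 := by omega
    norm_num [armEccSum]
  | succ x ih =>
    rcases le_or_gt (y + 1) x with h | h
    · obtain ⟨h₀, h₁⟩ := ih h
      rw [armEccSum_succ, max_eq_left h]
      push_cast at h₀ h₁ ⊢
      exact ⟨by linear_combination h₀, by linear_combination h₁⟩
    · have hG := two_mul_armEccSum_of_le (show x + 1 ≤ y + 2 by omega)
      zify at hG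
      rcases show y = x ∨ y = x + 1 by omega with rfl | rfl <;>
        push_cast at hG ⊢ <;> constructor <;> linarith

variable {k : ℕ}

section Eccentricity

variable {a : Fin (k + 2) → ℕ} (ha : Antitone a)
include ha

theorem eccentricity_none : eccentricity (starlike a) none = a 0 := by
  refine le_antisymm (eccentricity_le_iff.2 fun u => ?_) ?_
  · rcases u with _ | ⟨i, j⟩
    · simp
    · have := ha (Fin.zero_le i)
      have := dist_none_some_le i j
      omega
  · simpa [dist_starlike, starDist_none_armVertex le_rfl] using
      dist_le_eccentricity (starlike a) none (armVertex a 0 (a 0))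

theorem eccentricity_some_zero (j : Fin (a 0)) :
    eccentricity (starlike a) (some ⟨0, j⟩) = max (a 0 - 1 - j) (j + 1 + a 1) := by
  refine le_antisymm (eccentricity_le_iff.2 fun u => ?_) (max_le ?_ ?_)
  · rw [dist_starlike]
    rcases u with _ | ⟨i, j'⟩
    · simp [starDist, depth]
    · simp only [starDist]
      split_ifs with hi
      · subst hi
        omega
      · have := ha (Fin.one_le_of_ne_zero (Ne.symm hi))
        omega
  · have := dist_le_eccentricity (starlike a) (some ⟨0, j⟩) (armVertex a 0 (a 0))
    rw [dist_starlike, starDist_some_armVertex 0 j le_rfl, if_pos rfl] at this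
    omega
  · simpa [dist_starlike, starDist_some_armVertex 0 j le_rfl] using
      dist_le_eccentricity (starlike a) (some ⟨0, j⟩) (armVertex a 1 (a 1))

theorem eccentricity_some_succ (i : Fin (k + 1)) (j : Fin (a i.succ)) :
    eccentricity (starlike a) (some ⟨i.succ, j⟩) = j + 1 + a 0 := by
  refine le_antisymm (eccentricity_le_iff.2 fun u => ?_) ?_
  · have := ha (Fin.zero_le i.succ)
    rw [dist_starlike]
    rcases u with _ | ⟨i', j'⟩
    · simp [starDist, depth]
    · have := ha (Fin.zero_le i')
      simp only [starDist]
      split_ifs <;> omega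
  · simpa [dist_starlike, starDist_some_armVertex i.succ j le_rfl, Fin.succ_ne_zero] using
      dist_le_eccentricity (starlike a) (some ⟨i.succ, j⟩) (armVertex a 0 (a 0))

theorem sum_eccentricity_starlike :
    ∑ v, eccentricity (starlike a) v =
      a 0 + armEccSum (a 0) (a 1) +
        ∑ i : Fin (k + 1), ∑ j ∈ range (a i.succ), (j + 1 + a 0) := by
  rw [Fintype.sum_option, Fintype.sum_sigma, Fin.sum_univ_succ, eccentricity_none ha]
  simp only [eccentricity_some_zero ha, eccentricity_some_succ ha]
  simp only [Fin.sum_univ_eq_sum_range (fun j => max (a 0 - 1 - j) (j + 1 + a 1)),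
    Fin.sum_univ_eq_sum_range (fun j => j + 1 + a 0)]
  exact (add_assoc _ _ _).symm

end Eccentricity

def eccPoly (a : Fin (k + 2) → ℕ) : ℤ :=
  4 * a 0 * ∑ i, (a i : ℤ) + 2 * a 0 + 2 * a 1 + ((a 0 : ℤ) + a 1) ^ 2 +
    2 * ∑ i, (a i : ℤ) ^ 2 - 4 * (a 0 : ℤ) ^ 2 + 2 * ∑ i, (a i : ℤ) + 1

theorem eccPoly_sub_four_mul_sum_eccentricity_mem_Icc {a : Fin (k + 2) → ℕ} (ha : Antitone a) :
    eccPoly a - 4 * (∑ v, eccentricity (starlike a) v : ℕ) ∈ Set.Icc 0 1 := by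
  obtain ⟨h₀, h₁⟩ := sub_four_mul_armEccSum_mem_Icc (ha (Fin.zero_le 1))
  have hT : 2 * ∑ i : Fin (k + 1), ∑ j ∈ range (a i.succ), (j + 1 + a 0) =
      ∑ i : Fin (k + 1), (a i.succ ^ 2 + a i.succ + 2 * a i.succ * a 0) := by
    rw [mul_sum]
    exact sum_congr rfl fun i _ => two_mul_sum_range_add _ _
  rw [sum_eccentricity_starlike ha]
  generalize ∑ i : Fin (k + 1), ∑ j ∈ range (a i.succ), (j + 1 + a 0) = T at hT ⊢
  zify at hT
  rw [eccPoly, Fin.sum_univ_succ (fun i => (a i : ℤ)), Fin.sum_univ_succ (fun i => (a i : ℤ) ^ 2)]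
  push_cast at hT ⊢
  rw [sum_add_distrib, sum_add_distrib, ← sum_mul, ← mul_sum] at hT
  constructor <;> linarith

theorem eccPoly_le_eccPoly {p q : Fin (k + 2) → ℕ} (hp : Antitone p) (hq : Antitone q)
    (hmaj : ∀ m, ∑ i ∈ Iic m, q i ≤ ∑ i ∈ Iic m, p i) (hsum : ∑ i, q i = ∑ i, p i) :
    eccPoly q ≤ eccPoly p := by
  have hsq := sub_mul_le_sum_sq_sub_sum_sq hp hq hmaj
  have hIic : Iic (1 : Fin (k + 2)) = {0, 1} := by
    ext i
    simp only [mem_Iic, mem_insert, mem_singleton, Fin.le_def, Fin.ext_iff, Fin.val_zero,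
      Fin.val_one]
    omega
  have h₀ := hmaj 0
  have h₁ := hmaj 1
  rw [← bot_eq_zero, Iic_bot, sum_singleton, sum_singleton, bot_eq_zero] at h₀
  rw [hIic, sum_pair zero_ne_one, sum_pair zero_ne_one] at h₁
  have hp₁ : p 0 + p 1 ≤ ∑ i, p i := by simp [Fin.sum_univ_succ]
  have hq₁ : q 0 + q 1 ≤ ∑ i, q i := by simp [Fin.sum_univ_succ]
  have hsum' : ∑ i, (q i : ℤ) = ∑ i, (p i : ℤ) := by exact_mod_cast hsum
  rw [eccPoly, eccPoly, hsum']
  zify at h₀ h₁ hp₁ hq₁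
  have hN : (p 0 + p 1 + q 0 + q 1 : ℤ) ≤ 2 * ∑ i, (p i : ℤ) := by linarith
  have hpos : (0 : ℤ) ≤ p 0 + p 1 + q 0 + q 1 + 2 := by positivity
  linear_combination 2 * hsq + 2 * mul_nonneg (sub_nonneg.2 h₀) (sub_nonneg.2 hN) +
    mul_nonneg (sub_nonneg.2 h₁) hpos

theorem sum_eccentricity_le_of_majorize {p q : Fin (k + 2) → ℕ} (hp : Antitone p)
    (hq : Antitone q) (hmaj : ∀ m, ∑ i ∈ Iic m, q i ≤ ∑ i ∈ Iic m, p i)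
    (hsum : ∑ i, q i = ∑ i, p i) :
    ∑ v, eccentricity (starlike q) v ≤ ∑ v, eccentricity (starlike p) v := by
  obtain ⟨-, hp₁⟩ := eccPoly_sub_four_mul_sum_eccentricity_mem_Icc hp
  obtain ⟨hq₀, -⟩ := eccPoly_sub_four_mul_sum_eccentricity_mem_Icc hq
  have := eccPoly_le_eccPoly hp hq hmaj hsum
  omega

end Starlike

theorem avgEcc_starlike_of_majorize_general {k n : ℕ} (hk : 2 ≤ k) (p q : Fin k → ℕ)
    (hpa : Antitone p) (hqa : Antitone q)
    (hmaj : ∀ m : Fin k, ∑ i ∈ Finset.Iic m, q i ≤ ∑ i ∈ Finset.Iic m, p i)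
    (hsump : ∑ i, p i = n - 1) (hsumq : ∑ i, q i = n - 1) :
    avgEcc (starlike q) ≤ avgEcc (starlike p) := by
  obtain ⟨k, rfl⟩ := Nat.exists_eq_add_of_le' hk
  have hsum : ∑ i, q i = ∑ i, p i := hsumq.trans hsump.symm
  have hcard : Fintype.card (Option (Σ i, Fin (q i))) =
      Fintype.card (Option (Σ i, Fin (p i))) := by
    simp [hsum]
  rw [avgEcc, avgEcc, hcard]
  gcongr
  exact_mod_cast Starlike.sum_eccentricity_le_of_majorize hpa hqa hmaj hsum

/-- If the nonincreasing array `p` of positive integers majorizes the nonincreasing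
array `q`, both of length `k ≥ 2` and with common sum `n - 1`, then
`ecc (S(p₁,…,p_k)) ≥ ecc (S(q₁,…,q_k))`. -/
theorem avgEcc_starlike_of_majorize {k n : ℕ} (hk : 2 ≤ k) (p q : Fin k → ℕ)
    (hp1 : ∀ i, 1 ≤ p i) (hq1 : ∀ i, 1 ≤ q i)
    (hpa : Antitone p) (hqa : Antitone q)
    (hmaj : ∀ m : Fin k, ∑ i ∈ Finset.Iic m, q i ≤ ∑ i ∈ Finset.Iic m, p i)
    (hsump : ∑ i, p i = n - 1) (hsumq : ∑ i, q i = n - 1) :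
    avgEcc (starlike q) ≤ avgEcc (starlike p) :=
  avgEcc_starlike_of_majorize_general hk p q hpa hqa hmaj hsump hsumq
end

section
/- Let uv be a bridge of a connected simple graph G and let H and H′ be the two components of G − uv, both nontrivial (each having at least two vertices), with u ∈ H and v ∈ H′. Let G′ = σ(G,uv) be the graph obtained by identifying the vertices u and v into a single vertex u′ and attaching a new pendant vertex v′ adjacent to u′. Then ecc(G′) < ecc(G). -/
open SimpleGraph

/-- The `σ`-transform `σ(G, uv)` of `G` at the bridge `uv`: identify `u` and `v` into a
single vertex (played by `u`) and attach a new pendant vertex (played by `v`) to it.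
The vertex set is unchanged. -/
def sigmaTransform {V : Type*} (G : SimpleGraph V) (u v : V) : SimpleGraph V :=
  SimpleGraph.fromRel (fun x y =>
    (x ≠ v ∧ y ≠ v ∧ (G.Adj x y ∨ (x = u ∧ G.Adj v y) ∨ (y = u ∧ G.Adj x v))) ∨
    (x = u ∧ y = v))

/-!
Write `S = G - uv`; let `A` be the largest distance from `u` to a vertex of its component in
`S`, and `M` the same for `v`. Every walk between the sides crosses the bridge, so distances
across it split as `d(x, y) = d(x, u) + 1 + d(v, y)`. Collapsing `v` onto `u` sends each edge of
`G` to an edge or a loop of `G' = σ(G, uv)`, so it does not increase distances. Hence no vertex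
`w ≠ v` has a larger eccentricity in `G'`; the pendant `v` gains at most one over `u`, and this
is paid for because `ecc'(u) ≤ max A M` while `ecc(u) + ecc(v) ≥ 2 max A M + 1`. Strictness
comes from a farthest vertex of the side with the smaller radius, say `y` with
`d(v, y) = M ≤ A`: its eccentricity drops from at least `M + 1 + A` to at most `M + A`, the
latter bounding the detour through `u`.
-/

theorem Fintype.sum_lt_sum_of_pair_le {ι M : Type*} [Fintype ι] [AddCommMonoid M] [PartialOrder M]
    [IsOrderedCancelAddMonoid M] {f g : ι → M} {a b : ι} (hab : a ≠ b)
    (hpair : f a + f b ≤ g a + g b) (hle : ∀ i, i ≠ a → i ≠ b → f i ≤ g i)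
    (hlt : ∃ i, i ≠ a ∧ i ≠ b ∧ f i < g i) : ∑ i, f i < ∑ i, g i := by
  classical
  have hrest : ∑ i ∈ {a, b}ᶜ, f i < ∑ i ∈ {a, b}ᶜ, g i := by
    obtain ⟨i, hia, hib, hi⟩ := hlt
    refine Finset.sum_lt_sum (fun j hj => ?_) ⟨i, by simp [hia, hib], hi⟩
    simp only [Finset.mem_compl, Finset.mem_insert, Finset.mem_singleton, not_or] at hj
    exact hle j hj.1 hj.2
  rw [← Finset.sum_compl_add_sum {a, b}, ← Finset.sum_compl_add_sum {a, b},
    Finset.sum_pair hab, Finset.sum_pair hab]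
  exact add_lt_add_of_lt_of_le hrest hpair

namespace SimpleGraph

variable {V W : Type*} {G : SimpleGraph V} {u v a b x y z w : V}

theorem Walk.exists_walk_length_le_of_eq_or_adj {G' : SimpleGraph W} {f : V → W}
    (hf : ∀ ⦃a b⦄, G.Adj a b → f a = f b ∨ G'.Adj (f a) (f b)) (p : G.Walk a b) :
    ∃ q : G'.Walk (f a) (f b), q.length ≤ p.length := by
  induction p with
  | nil => exact ⟨.nil, le_rfl⟩
  | cons h p ih =>
    obtain ⟨q, hq⟩ := ih
    rcases hf h with heq | hadj
    · exact ⟨q.copy heq.symm rfl, by simp only [Walk.length_copy, Walk.length_cons]; omega⟩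
    · exact ⟨.cons hadj q, by simp [hq]⟩

theorem Reachable.map_of_eq_or_adj {G' : SimpleGraph W} {f : V → W}
    (hf : ∀ ⦃a b⦄, G.Adj a b → f a = f b ∨ G'.Adj (f a) (f b)) (h : G.Reachable a b) :
    G'.Reachable (f a) (f b) :=
  let ⟨p⟩ := h
  (p.exists_walk_length_le_of_eq_or_adj hf).elim fun q _ => q.reachable

theorem dist_apply_le_of_eq_or_adj {G' : SimpleGraph W} {f : V → W}
    (hf : ∀ ⦃a b⦄, G.Adj a b → f a = f b ∨ G'.Adj (f a) (f b)) (h : G.Reachable a b) :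
    G'.dist (f a) (f b) ≤ G.dist a b := by
  obtain ⟨p, hp⟩ := h.exists_walk_length_eq_dist
  obtain ⟨q, hq⟩ := p.exists_walk_length_le_of_eq_or_adj hf
  exact (dist_le q).trans (hp ▸ hq)

theorem Reachable.reachable_deleteEdges_or (h : G.Reachable u z) :
    (G.deleteEdges {s(u, v)}).Reachable u z ∨ (G.deleteEdges {s(u, v)}).Reachable v z := by
  obtain ⟨p⟩ := h.symm
  suffices ∀ {a b} (p : G.Walk a b),
      (G.deleteEdges {s(u, v)}).Reachable u b ∨ (G.deleteEdges {s(u, v)}).Reachable v b →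
      (G.deleteEdges {s(u, v)}).Reachable u a ∨ (G.deleteEdges {s(u, v)}).Reachable v a from
    this p (.inl .rfl)
  intro a b p hb
  induction p with
  | nil => exact hb
  | @cons a c b hac p ih =>
    by_cases he : s(a, c) = s(u, v)
    · rcases Sym2.eq_iff.mp he with ⟨rfl, -⟩ | ⟨rfl, -⟩
      exacts [.inl .rfl, .inr .rfl]
    · have hS : (G.deleteEdges {s(u, v)}).Adj c a := by simp [hac.symm, Sym2.eq_swap, he]
      exact (ih hb).imp (·.trans hS.reachable) (·.trans hS.reachable)

theorem Walk.dist_add_one_add_dist_le_length (hb : G.IsBridge s(u, v))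
    (hx : (G.deleteEdges {s(u, v)}).Reachable u x) (hy : (G.deleteEdges {s(u, v)}).Reachable v y)
    (p : G.Walk x y) : G.dist x u + 1 + G.dist v y ≤ p.length := by
  induction p with
  | nil => exact absurd (hx.trans hy.symm) hb
  | @cons x w y hxw p ih =>
    by_cases he : s(x, w) = s(u, v)
    · rcases Sym2.eq_iff.mp he with ⟨rfl, rfl⟩ | ⟨rfl, -⟩
      · have := dist_le p
        simp only [dist_self, Walk.length_cons]
        omega
      · exact absurd hx hb
    · have hS : (G.deleteEdges {s(u, v)}).Adj x w := by simp [hxw, he]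
      have hxu : G.dist x u ≤ G.dist x w + G.dist w u := hxw.reachable.dist_triangle_left u
      have := ih (hx.trans hS.reachable) hy
      rw [dist_eq_one_iff_adj.mpr hxw] at hxu
      simp only [Walk.length_cons]
      omega

theorem IsBridge.dist_eq_dist_add_one_add_dist (hb : G.IsBridge s(u, v)) (huv : G.Adj u v)
    (hx : (G.deleteEdges {s(u, v)}).Reachable u x) (hy : (G.deleteEdges {s(u, v)}).Reachable v y) :
    G.dist x y = G.dist x u + 1 + G.dist v y := by
  have hxu : G.Reachable x u := (hx.mono (deleteEdges_le _)).symm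
  have hvy : G.Reachable v y := hy.mono (deleteEdges_le _)
  refine le_antisymm ?_ ?_
  · calc G.dist x y ≤ G.dist x u + G.dist u y := hxu.dist_triangle_left y
      _ ≤ G.dist x u + (G.dist u v + G.dist v y) := by
        gcongr; exact huv.reachable.dist_triangle_left y
      _ = G.dist x u + 1 + G.dist v y := by rw [dist_eq_one_iff_adj.mpr huv]; ring
  · obtain ⟨p, hp⟩ := (hxu.trans (huv.reachable.trans hvy)).exists_walk_length_eq_dist
    exact hp ▸ p.dist_add_one_add_dist_le_length hb hx hy

theorem exists_ne_reachable_forall_dist_le [Finite V] {H : SimpleGraph V} (hle : H ≤ G)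
    (h : ∃ x, x ≠ a ∧ H.Reachable a x) :
    ∃ x, x ≠ a ∧ H.Reachable a x ∧
      ∀ z, H.Reachable a z → G.dist a z ≤ G.dist a x := by
  obtain ⟨x, hx, hmax⟩ :=
    Set.exists_max_image {z | H.Reachable a z} (G.dist a) (Set.toFinite _) ⟨a, .rfl⟩
  refine ⟨x, ?_, hx, hmax⟩
  rintro rfl
  obtain ⟨x₀, hx₀, hax₀⟩ := h
  have hpos := (hax₀.mono hle).pos_dist_of_ne hx₀.symm
  have hle₀ : G.dist x x₀ ≤ G.dist x x := hmax x₀ hax₀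
  rw [dist_self] at hle₀
  omega

theorem sigmaTransform_adj_of_ne (huv : u ≠ v) : (sigmaTransform G u v).Adj u v := by
  simp [sigmaTransform, huv]

theorem sigmaTransform_adj_update [DecidableEq V] (huv : u ≠ v) (hab : G.Adj a b) :
    Function.update id v u a = Function.update id v u b ∨
      (sigmaTransform G u v).Adj (Function.update id v u a) (Function.update id v u b) := by
  by_cases ha : a = v <;> by_cases hb : b = v <;> simp_all [sigmaTransform, em]

theorem dist_sigmaTransform_le (huv : u ≠ v) (h : G.Reachable a b) (ha : a ≠ v) (hb : b ≠ v) :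
    (sigmaTransform G u v).dist a b ≤ G.dist a b := by
  classical
  simpa [ha, hb] using dist_apply_le_of_eq_or_adj (fun _ _ => sigmaTransform_adj_update huv) h

theorem dist_sigmaTransform_le_dist_right (huv : u ≠ v) (h : G.Reachable a v) (ha : a ≠ v) :
    (sigmaTransform G u v).dist a u ≤ G.dist a v := by
  classical
  simpa [ha] using dist_apply_le_of_eq_or_adj (fun _ _ => sigmaTransform_adj_update huv) h

theorem Connected.sigmaTransform (hG : G.Connected) (huv : u ≠ v) :
    (sigmaTransform G u v).Connected := by
  classical
  refine (connected_iff_exists_forall_reachable _).mpr ⟨u, fun z => ?_⟩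
  by_cases hz : z = v
  · exact hz.symm ▸ (sigmaTransform_adj_of_ne (G := G) huv).reachable
  · simpa [huv, hz] using (hG u z).map_of_eq_or_adj (fun _ _ => sigmaTransform_adj_update huv)

section Eccentricity

variable [Fintype V]

theorem dist_le_eccentricity (G : SimpleGraph V) (v w : V) : G.dist v w ≤ eccentricity G v :=
  Finset.le_sup (Finset.mem_univ w)

theorem eccentricity_le_iff {n : ℕ} : eccentricity G v ≤ n ↔ ∀ w, G.dist v w ≤ n := by
  simp [eccentricity]

theorem Connected.eccentricity_le_dist_add (hG : G.Connected) (a b : V) :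
    eccentricity G a ≤ G.dist a b + eccentricity G b :=
  eccentricity_le_iff.mpr fun w =>
    hG.dist_triangle.trans (Nat.add_le_add_left (dist_le_eccentricity G b w) _)

theorem avgEcc_lt_avgEcc_of_sum_lt {G' : SimpleGraph V}
    (h : ∑ w, eccentricity G' w < ∑ w, eccentricity G w) : avgEcc G' < avgEcc G := by
  have : Nonempty V := by
    by_contra hV
    simp [not_nonempty_iff.mp hV] at h
  unfold avgEcc
  exact div_lt_div_of_pos_right (by exact_mod_cast h) (by exact_mod_cast Fintype.card_pos)

theorem eccentricity_sigmaTransform_le (hG : G.Connected) (hb : G.IsBridge s(u, v))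
    (huv : G.Adj u v) (hw : w ≠ v) :
    eccentricity (sigmaTransform G u v) w ≤ eccentricity G w := by
  refine eccentricity_le_iff.mpr fun z => ?_
  by_cases hz : z = v
  · rw [hz]
    have hwu : (sigmaTransform G u v).dist w u + 1 ≤ max (G.dist w u) (G.dist w v) := by
      rcases (hG u w).reachable_deleteEdges_or (v := v) with hside | hside
      · have hcontract := dist_sigmaTransform_le huv.ne (hG w u) hw huv.ne
        have hcross := hb.dist_eq_dist_add_one_add_dist huv hside .rfl
        simp only [dist_self] at hcross
        omega
      · have hcontract := dist_sigmaTransform_le_dist_right huv.ne (hG w v) hw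
        have hcross := hb.dist_eq_dist_add_one_add_dist huv .rfl hside
        simp only [dist_self, dist_comm (u := v), dist_comm (u := u)] at hcross
        omega
    calc (sigmaTransform G u v).dist w v
        ≤ (sigmaTransform G u v).dist w u + (sigmaTransform G u v).dist u v :=
          (hG.sigmaTransform huv.ne).dist_triangle
      _ = (sigmaTransform G u v).dist w u + 1 := by
          rw [dist_eq_one_iff_adj.mpr (sigmaTransform_adj_of_ne huv.ne)]
      _ ≤ max (G.dist w u) (G.dist w v) := hwu
      _ ≤ eccentricity G w := max_le (dist_le_eccentricity G w u) (dist_le_eccentricity G w v)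
  · exact (dist_sigmaTransform_le huv.ne (hG w z) hw hz).trans (dist_le_eccentricity G w z)

theorem eccentricity_sigmaTransform_self_le (hG : G.Connected) (huv : u ≠ v) {r : ℕ}
    (hr : 1 ≤ r) (hu : ∀ z, (G.deleteEdges {s(u, v)}).Reachable u z → G.dist u z ≤ r)
    (hv : ∀ z, (G.deleteEdges {s(u, v)}).Reachable v z → G.dist v z ≤ r) :
    eccentricity (sigmaTransform G u v) u ≤ r := by
  refine eccentricity_le_iff.mpr fun z => ?_
  by_cases hz : z = v
  · rwa [hz, dist_eq_one_iff_adj.mpr (sigmaTransform_adj_of_ne huv)]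
  rcases (hG u z).reachable_deleteEdges_or with hz' | hz'
  · exact (dist_sigmaTransform_le huv (hG u z) huv hz).trans (hu z hz')
  · rw [dist_comm]
    exact (dist_sigmaTransform_le_dist_right huv (hG z v) hz).trans (dist_comm.trans_le (hv z hz'))

theorem eccentricity_sigmaTransform_add_le (hG : G.Connected) (hb : G.IsBridge s(u, v))
    (huv : G.Adj u v) (hx : (G.deleteEdges {s(u, v)}).Reachable u x)
    (hy : (G.deleteEdges {s(u, v)}).Reachable v y)
    (hecc : eccentricity (sigmaTransform G u v) u ≤ max (G.dist u x) (G.dist v y)) :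
    eccentricity (sigmaTransform G u v) u + eccentricity (sigmaTransform G u v) v ≤
      eccentricity G u + eccentricity G v := by
  have hvu := (hG.sigmaTransform huv.ne).eccentricity_le_dist_add v u
  rw [dist_comm, dist_eq_one_iff_adj.mpr (sigmaTransform_adj_of_ne huv.ne)] at hvu
  have huy : G.dist u y = 1 + G.dist v y := by
    simpa using hb.dist_eq_dist_add_one_add_dist huv .rfl hy
  have hvx : G.dist v x = G.dist u x + 1 := by
    simpa [dist_comm] using hb.dist_eq_dist_add_one_add_dist huv hx .rfl
  have := dist_le_eccentricity G u x
  have := dist_le_eccentricity G u y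
  have := dist_le_eccentricity G v x
  have := dist_le_eccentricity G v y
  omega

theorem exists_eccentricity_sigmaTransform_lt (hG : G.Connected) (hb : G.IsBridge s(u, v))
    (huv : G.Adj u v) (hxu : x ≠ u) (hyv : y ≠ v) (hx : (G.deleteEdges {s(u, v)}).Reachable u x)
    (hy : (G.deleteEdges {s(u, v)}).Reachable v y)
    (hecc : eccentricity (sigmaTransform G u v) u ≤ max (G.dist u x) (G.dist v y)) :
    ∃ w, w ≠ u ∧ w ≠ v ∧ eccentricity (sigmaTransform G u v) w < eccentricity G w := by
  have hxy := hb.dist_eq_dist_add_one_add_dist huv hx hy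
  have hG' := hG.sigmaTransform huv.ne
  rcases le_total (G.dist v y) (G.dist u x) with h | h
  · refine ⟨y, fun hyu => hb (hyu ▸ hy).symm, hyv, ?_⟩
    calc eccentricity (sigmaTransform G u v) y
        ≤ (sigmaTransform G u v).dist y u + eccentricity (sigmaTransform G u v) u :=
          hG'.eccentricity_le_dist_add y u
      _ ≤ G.dist y v + G.dist u x :=
          add_le_add (dist_sigmaTransform_le_dist_right huv.ne (hG y v) hyv)
            (hecc.trans (max_eq_left h).le)
      _ < G.dist y x := by
          rw [dist_comm (u := y) (v := x), hxy, dist_comm (u := x) (v := u),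
            dist_comm (u := y) (v := v)]
          omega
      _ ≤ eccentricity G y := dist_le_eccentricity G y x
  · have hxv : x ≠ v := fun hxv => hb (hxv ▸ hx)
    refine ⟨x, hxu, hxv, ?_⟩
    calc eccentricity (sigmaTransform G u v) x
        ≤ (sigmaTransform G u v).dist x u + eccentricity (sigmaTransform G u v) u :=
          hG'.eccentricity_le_dist_add x u
      _ ≤ G.dist x u + G.dist v y :=
          add_le_add (dist_sigmaTransform_le huv.ne (hG x u) hxv huv.ne)
            (hecc.trans (max_eq_right h).le)
      _ < G.dist x y := by rw [hxy]; omega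
      _ ≤ eccentricity G x := dist_le_eccentricity G x y

end Eccentricity

end SimpleGraph

/-- If `uv` is a bridge of a connected graph `G` whose two components (of `G - uv`) are
both nontrivial, then `ecc (σ(G, uv)) < ecc G`. -/
theorem avgEcc_sigmaTransform_lt {V : Type*} [Fintype V] (G : SimpleGraph V) (u v : V)
    (hG : G.Connected) (hbridge : G.IsBridge s(u, v))
    (hH : ∃ x, x ≠ u ∧ (G.deleteEdges {s(u, v)}).Reachable u x)
    (hH' : ∃ y, y ≠ v ∧ (G.deleteEdges {s(u, v)}).Reachable v y) :
    avgEcc (sigmaTransform G u v) < avgEcc G := by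
  have huv : G.Adj u v := hbridge.reachable_iff_adj.mp (hG u v)
  obtain ⟨x, hxu, hx, hxmax⟩ := exists_ne_reachable_forall_dist_le (deleteEdges_le _) hH
  obtain ⟨y, hyv, hy, hymax⟩ := exists_ne_reachable_forall_dist_le (deleteEdges_le _) hH'
  have hecc : eccentricity (sigmaTransform G u v) u ≤ max (G.dist u x) (G.dist v y) :=
    eccentricity_sigmaTransform_self_le hG huv.ne
      (le_max_of_le_left ((hG u x).pos_dist_of_ne hxu.symm))
      (fun z hz => le_max_of_le_left (hxmax z hz)) (fun z hz => le_max_of_le_right (hymax z hz))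
  apply avgEcc_lt_avgEcc_of_sum_lt
  exact Fintype.sum_lt_sum_of_pair_le huv.ne
    (eccentricity_sigmaTransform_add_le hG hbridge huv hx hy hecc)
    (fun w _ hwv => eccentricity_sigmaTransform_le hG hbridge huv hwv)
    (exists_eccentricity_sigmaTransform_lt hG hbridge huv hxu hyv hx hy hecc)
end
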